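/- Let α ∈ ℂ, let U ⊆ ℂ be open, and let u : ℂ → ℂ be four times complex differentiable on U and satisfy u''''(t) = −5 u'(t) u''(t) + 5 u(t)² u''(t) + 5 u(t) (u'(t))² − u(t)⁵ + t·u(t) + α for all t ∈ U. Then the functions q₁ := −u, p₁ := −(u''' − (1/2)u⁴ − u² u' + (3/2)(u')² + 2 u u'' + t/2), q₂ := −(u'' + 2 u u'), p₂ := −(u' + u²) are differentiable on U and satisfy the Hamiltonian system q₁' = q₁² + p₂, p₁' = −2 q₁ p₁ − α − 1/2, q₂' = −(1/2) p₂² + p₁ + t/2, p₂' = q₂ on U. -/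

import Mathlib

/-!
The transformation writes `p₂`, `q₂`, `p₁` as polynomials in `t, u, u', u'', u'''`, so after the
product and chain rules every equation of the Hamiltonian system becomes a polynomial identity in
`t, u, …, u''''`. The first, third and fourth hold identically; the second holds once `u''''` is
eliminated by the fourth-order equation.
-/

section DerivativeChain

variable {𝕜 : Type*} [NontriviallyNormedField 𝕜] {u u' u'' u''' : 𝕜 → 𝕜} {t u'''' : 𝕜}

theorem hasDerivAt_p₂ (h₀ : HasDerivAt u (u' t) t) (h₁ : HasDerivAt u' (u'' t) t) :
    HasDerivAt (fun s => -(u' s + u s ^ 2)) (-(u'' t + 2 * u t * u' t)) t := by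
  refine (h₁.add (h₀.pow 2)).neg.congr_deriv ?_
  ring

theorem hasDerivAt_q₂ (h₀ : HasDerivAt u (u' t) t)
    (h₁ : HasDerivAt u' (u'' t) t) (h₂ : HasDerivAt u'' (u''' t) t) :
    HasDerivAt (fun s => -(u'' s + 2 * u s * u' s))
      (-(u''' t + 2 * (u' t ^ 2 + u t * u'' t))) t := by
  refine (h₂.add ((h₀.const_mul 2).mul h₁)).neg.congr_deriv ?_
  ring

theorem hasDerivAt_p₁ [CharZero 𝕜] (h₀ : HasDerivAt u (u' t) t) (h₁ : HasDerivAt u' (u'' t) t)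
    (h₂ : HasDerivAt u'' (u''' t) t) (h₃ : HasDerivAt u''' u'''' t) :
    HasDerivAt (fun s => -(u''' s - (1/2) * u s ^ 4 - u s ^ 2 * u' s + (3/2) * u' s ^ 2
        + 2 * u s * u'' s + s / 2))
      (-(u'''' - 2 * u t ^ 3 * u' t - (2 * u t * u' t ^ 2 + u t ^ 2 * u'' t)
        + 3 * u' t * u'' t + 2 * (u' t * u'' t + u t * u''' t) + 1/2)) t := by
  have hid : HasDerivAt (fun s : 𝕜 => s / 2) (1 / 2) t := (hasDerivAt_id t).div_const 2
  refine (((((h₃.sub ((h₀.pow 4).const_mul (1/2))).sub ((h₀.pow 2).mul h₁)).add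
    ((h₁.pow 2).const_mul (3/2))).add ((h₀.const_mul 2).mul h₂)).add hid).neg.congr_deriv ?_
  simp only [Pi.pow_apply, Nat.cast_ofNat]
  ring

end DerivativeChain

theorem stmt0 (α : ℂ) (U : Set ℂ) (u : ℂ → ℂ)
    (h1 : ∀ t ∈ U, HasDerivAt u (deriv u t) t)
    (h2 : ∀ t ∈ U, HasDerivAt (deriv u) (deriv (deriv u) t) t)
    (h3 : ∀ t ∈ U, HasDerivAt (deriv (deriv u)) (deriv (deriv (deriv u)) t) t)
    (h4 : ∀ t ∈ U, HasDerivAt (deriv (deriv (deriv u)))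
      (deriv (deriv (deriv (deriv u))) t) t)
    (hode : ∀ t ∈ U, deriv (deriv (deriv (deriv u))) t =
      -5 * deriv u t * deriv (deriv u) t + 5 * (u t) ^ 2 * deriv (deriv u) t
        + 5 * u t * (deriv u t) ^ 2 - (u t) ^ 5 + t * u t + α) :
    ∀ t ∈ U,
      (HasDerivAt (fun s => -u s)
        ((-u t) ^ 2 + -(deriv u t + (u t) ^ 2)) t) ∧
      (HasDerivAt (fun s => -(deriv (deriv (deriv u)) s - (1/2) * (u s) ^ 4
            - (u s) ^ 2 * deriv u s + (3/2) * (deriv u s) ^ 2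
            + 2 * u s * deriv (deriv u) s + s / 2))
        (-2 * (-u t) * (-(deriv (deriv (deriv u)) t - (1/2) * (u t) ^ 4
            - (u t) ^ 2 * deriv u t + (3/2) * (deriv u t) ^ 2
            + 2 * u t * deriv (deriv u) t + t / 2)) - α - 1/2) t) ∧
      (HasDerivAt (fun s => -(deriv (deriv u) s + 2 * u s * deriv u s))
        (-(1/2) * (-(deriv u t + (u t) ^ 2)) ^ 2
          + (-(deriv (deriv (deriv u)) t - (1/2) * (u t) ^ 4
            - (u t) ^ 2 * deriv u t + (3/2) * (deriv u t) ^ 2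
            + 2 * u t * deriv (deriv u) t + t / 2)) + t / 2) t) ∧
      (HasDerivAt (fun s => -(deriv u s + (u s) ^ 2))
        (-(deriv (deriv u) t + 2 * u t * deriv u t)) t) := by
  intro t ht
  have H1 := h1 t ht
  have H2 := h2 t ht
  have H3 := h3 t ht
  refine ⟨H1.neg.congr_deriv (by ring), ?_,
    (hasDerivAt_q₂ H1 H2 H3).congr_deriv (by ring),
    hasDerivAt_p₂ H1 H2⟩
  refine (hasDerivAt_p₁ H1 H2 H3 (h4 t ht)).congr_deriv ?_
  rw [hode t ht]
  ring
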